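/- Let d ≥ 1 and m ≥ 1 be integers and let μ⁺ and μ⁻ be Borel measures on (ℝ^d)^m, with μ⁻ a finite measure. For t > 0 and x ∈ ℝ^d write A_{t,x} = {y ∈ (ℝ^d)^m : y_i + x ∈ [−t,t]^d for all i = 1,…,m}. Suppose there exist constants κ ≥ 0 and T > 0 such that for all t ≥ T, ∫⁻_{x ∈ [−t,t]^d} μ⁺(A_{t,x}) dx ≤ κ·t^d + ∫⁻_{x ∈ [−t,t]^d} μ⁻(A_{t,x}) dx. Then μ⁺ is a finite measure, and μ⁺((ℝ^d)^m) ≤ κ + 2^d · μ⁻((ℝ^d)^m). -/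

import Mathlib

/-!
Cubes `[-t,t]^d` are balls for the sup norm, and `A_{t,x}` is the ball of radius `t` about
`(-x, …, -x)`. For `t ≥ 2r` and `x` in the cube of half-side `t - r`, it therefore contains the
cube `B_r` of half-side `r` in `(ℝ^d)^m`, so the left integral is at least
`μ⁺(B_r) (2(t - r))^d ≥ μ⁺(B_r) t^d`, while the right side is at most `κ t^d + μ⁻(total) (2t)^d`.
Dividing by `t^d` bounds `μ⁺(B_r)` uniformly in `r`, and the cubes `B_r` exhaust the space.
-/

open MeasureTheory Metric Set ENNReal

variable {ι ι' : Type*} [Fintype ι]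

lemma Icc_neg_const_eq_closedBall_zero {t : ℝ} (ht : 0 ≤ t) :
    Icc (fun _ : ι => -t) (fun _ => t) = closedBall 0 t := by
  rw [closedBall_pi _ ht, ← pi_univ_Icc]
  simp only [Pi.zero_apply, Real.closedBall_zero_eq_Icc]

lemma setOf_forall_add_mem_closedBall_zero {E : Type*} [SeminormedAddCommGroup E] {t : ℝ}
    (ht : 0 ≤ t) (x : E) :
    {y : ι → E | ∀ i, y i + x ∈ closedBall 0 t} = closedBall (fun _ => -x) t := by
  ext y
  rw [mem_closedBall, dist_pi_le_iff ht]
  simp only [mem_ofPred_eq, mem_closedBall_zero_iff, dist_eq_norm, sub_neg_eq_add]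

lemma closedBall_zero_subset_closedBall_neg_const {E : Type*} [SeminormedAddCommGroup E]
    {r t : ℝ} {x : E} (hx : ‖x‖ ≤ t - r) :
    closedBall (0 : ι → E) r ⊆ closedBall (fun _ => -x) t := by
  refine closedBall_subset_closedBall' ?_
  have : dist (0 : ι → E) (fun _ => -x) ≤ ‖x‖ := by
    simpa only [dist_zero_left, norm_neg] using pi_norm_const_le (ι := ι) (-x)
  linarith

lemma measure_closedBall_mul_le_setLIntegral {E : Type*} [SeminormedAddCommGroup E]
    [MeasurableSpace E] [OpensMeasurableSpace E] (ν : Measure E) (μ : Measure (ι → E))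
    {r t : ℝ} (hr : 0 ≤ r) :
    μ (closedBall 0 r) * ν (closedBall 0 (t - r)) ≤
      ∫⁻ x in closedBall 0 t, μ (closedBall (fun _ => -x) t) ∂ν :=
  calc μ (closedBall 0 r) * ν (closedBall 0 (t - r))
      = ∫⁻ _ in closedBall 0 (t - r), μ (closedBall 0 r) ∂ν := (setLIntegral_const _ _).symm
    _ ≤ ∫⁻ x in closedBall 0 (t - r), μ (closedBall (fun _ => -x) t) ∂ν :=
        setLIntegral_mono' measurableSet_closedBall fun x hx =>
          measure_mono (closedBall_zero_subset_closedBall_neg_const (mem_closedBall_zero_iff.1 hx))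
    _ ≤ _ := lintegral_mono_set (closedBall_subset_closedBall (by linarith))

lemma measure_univ_le_of_forall_closedBall_le {X : Type*} [PseudoMetricSpace X]
    [MeasurableSpace X] (μ : Measure X) (x : X) {c : ℝ≥0∞}
    (h : ∀ r > 0, μ (closedBall x r) ≤ c) : μ univ ≤ c := by
  rw [← iUnion_closedBall_nat x,
    (monotone_nat_of_le_succ fun n => closedBall_subset_closedBall (by simp)).measure_iUnion]
  exact iSup_le fun n =>
    (measure_mono (closedBall_subset_closedBall (by simp))).trans (h (n + 1) (by positivity))

variable [Fintype ι']

lemma measure_closedBall_le_of_translate_bound (μp μm : Measure (ι → ι' → ℝ)) {κ T : ℝ}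
    (h : ∀ t, T ≤ t → 0 ≤ t →
      ∫⁻ x in closedBall 0 t, μp (closedBall (fun _ => -x) t) ≤
        ENNReal.ofReal (κ * t ^ Fintype.card ι') +
          ∫⁻ x in closedBall 0 t, μm (closedBall (fun _ => -x) t))
    {r : ℝ} (hr : 0 < r) :
    μp (closedBall 0 r) ≤ ENNReal.ofReal κ + 2 ^ Fintype.card ι' * μm univ := by
  set n := Fintype.card ι'
  set t := max T (2 * r)
  have ht : 0 < t := lt_max_of_lt_right (by positivity)
  have hrt : t ≤ 2 * (t - r) := by linarith [le_max_right T (2 * r)]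
  have htn : ENNReal.ofReal (t ^ n) ≠ 0 := (ofReal_pos.2 (pow_pos ht n)).ne'
  refine (ENNReal.mul_le_mul_iff_left htn ofReal_ne_top).1 ?_
  calc μp (closedBall 0 r) * ENNReal.ofReal (t ^ n)
      ≤ μp (closedBall 0 r) * volume (closedBall (0 : ι' → ℝ) (t - r)) := by
        rw [Real.volume_pi_closedBall _ (by linarith)]
        gcongr
    _ ≤ ∫⁻ x in closedBall 0 t, μp (closedBall (fun _ => -x) t) :=
        measure_closedBall_mul_le_setLIntegral volume μp hr.le
    _ ≤ ENNReal.ofReal (κ * t ^ n) + ∫⁻ x in closedBall 0 t, μm (closedBall (fun _ => -x) t) :=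
        h t (le_max_left _ _) ht.le
    _ ≤ ENNReal.ofReal (κ * t ^ n) + μm univ * volume (closedBall (0 : ι' → ℝ) t) := by
        gcongr
        exact (lintegral_mono fun x => measure_mono (subset_univ _)).trans_eq
          (setLIntegral_const _ _)
    _ = (ENNReal.ofReal κ + 2 ^ n * μm univ) * ENNReal.ofReal (t ^ n) := by
        rw [Real.volume_pi_closedBall _ ht.le, ofReal_mul' (by positivity), mul_pow,
          ofReal_mul (by positivity), ofReal_pow zero_le_two, ofReal_ofNat]
        ring

theorem measure_univ_le_of_translate_bound (μp μm : Measure (ι → ι' → ℝ)) {κ T : ℝ}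
    (h : ∀ t, T ≤ t → 0 ≤ t →
      ∫⁻ x in closedBall 0 t, μp (closedBall (fun _ => -x) t) ≤
        ENNReal.ofReal (κ * t ^ Fintype.card ι') +
          ∫⁻ x in closedBall 0 t, μm (closedBall (fun _ => -x) t)) :
    μp univ ≤ ENNReal.ofReal κ + 2 ^ Fintype.card ι' * μm univ :=
  measure_univ_le_of_forall_closedBall_le μp 0 fun _ hr =>
    measure_closedBall_le_of_translate_bound μp μm h hr

theorem measure_finite_of_translate_bound_sub_general (d m : ℕ)
    (μp μm : Measure (Fin m → Fin d → ℝ))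
    (κ T : ℝ)
    (h : ∀ t : ℝ, T ≤ t →
      (∫⁻ x in Set.Icc (fun _ : Fin d => -t) (fun _ => t),
        μp {y : Fin m → Fin d → ℝ |
            ∀ i, y i + x ∈ Set.Icc (fun _ : Fin d => -t) (fun _ => t)})
        ≤ ENNReal.ofReal (κ * t ^ d) +
          ∫⁻ x in Set.Icc (fun _ : Fin d => -t) (fun _ => t),
            μm {y : Fin m → Fin d → ℝ |
                ∀ i, y i + x ∈ Set.Icc (fun _ : Fin d => -t) (fun _ => t)}) :
    μp Set.univ ≤ ENNReal.ofReal κ + 2 ^ d * μm Set.univ := by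
  have h_ball : ∀ t, T ≤ t → 0 ≤ t →
      ∫⁻ x in closedBall 0 t, μp (closedBall (fun _ => -x) t) ≤
        ENNReal.ofReal (κ * t ^ Fintype.card (Fin d)) +
          ∫⁻ x in closedBall 0 t, μm (closedBall (fun _ => -x) t) := fun t hTt ht => by
    simpa only [Icc_neg_const_eq_closedBall_zero ht, setOf_forall_add_mem_closedBall_zero ht,
      Fintype.card_fin] using h t hTt
  simpa only [Fintype.card_fin] using measure_univ_le_of_translate_bound μp μm h_ball

/-- Reduction step in the proof of Brillinger mixing: if `μ⁻` is finite and
`∫⁻_{x ∈ [−t,t]^d} μ⁺(A_{t,x}) dx ≤ κ t^d + ∫⁻_{x ∈ [−t,t]^d} μ⁻(A_{t,x}) dx` for all `t ≥ T`,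
where `A_{t,x} = {y | ∀ i, y i + x ∈ [−t,t]^d}`, then `μ⁺` is finite with total mass at most
`κ + 2^d μ⁻((ℝ^d)^m)`. -/
theorem measure_finite_of_translate_bound_sub (d m : ℕ) (hd : 1 ≤ d) (hm : 1 ≤ m)
    (μp μm : Measure (Fin m → Fin d → ℝ)) [IsFiniteMeasure μm]
    (κ T : ℝ) (hκ : 0 ≤ κ) (hT : 0 < T)
    (h : ∀ t : ℝ, T ≤ t →
      (∫⁻ x in Set.Icc (fun _ : Fin d => -t) (fun _ => t),
        μp {y : Fin m → Fin d → ℝ |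
            ∀ i, y i + x ∈ Set.Icc (fun _ : Fin d => -t) (fun _ => t)})
        ≤ ENNReal.ofReal (κ * t ^ d) +
          ∫⁻ x in Set.Icc (fun _ : Fin d => -t) (fun _ => t),
            μm {y : Fin m → Fin d → ℝ |
                ∀ i, y i + x ∈ Set.Icc (fun _ : Fin d => -t) (fun _ => t)}) :
    μp Set.univ ≤ ENNReal.ofReal κ + 2 ^ d * μm Set.univ :=
  measure_finite_of_translate_bound_sub_general d m μp μm κ T h
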